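/- Let M be the set of monomials X_K Y_L Z_{[1,n]\{i}} for some fixed i, where K ∪ L = [1,n]\{i-1,i+1}, K ∩ L = ∅. If m ∈ M and x_l divides m, then (y_l/x_l)·m ∈ M; if y_k divides m, then (x_k/y_k)·m ∈ M; and if both x_l and y_k divide m (l ≠ k), then (x_k y_l)/(x_l y_k)·m ∈ M. Consequently, the S-polynomial of any binomial c·Δ_{l,k} whose terms are squarefree with any m ∈ M reduces to zero modulo the set M together with c·Δ_{l,k}. -/

import Mathlib

open MvPolynomial

/-- 1-based index `i ∈ [1,n]` as an element of `Fin n`. -/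
def fi (n : ℕ) (hn : 0 < n) (i : ℕ) : Fin n := ⟨(i - 1) % n, Nat.mod_lt _ hn⟩

noncomputable def xz (k : Type*) [Field k] (n : ℕ) (hn : 0 < n) (i : ℕ) :
    MvPolynomial (Fin 3 × Fin n) k := X (0, fi n hn i)

noncomputable def yz (k : Type*) [Field k] (n : ℕ) (hn : 0 < n) (i : ℕ) :
    MvPolynomial (Fin 3 × Fin n) k := X (1, fi n hn i)

noncomputable def zz (k : Type*) [Field k] (n : ℕ) (hn : 0 < n) (i : ℕ) :
    MvPolynomial (Fin 3 × Fin n) k := X (2, fi n hn i)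

noncomputable def Δz (k : Type*) [Field k] (n : ℕ) (hn : 0 < n) (a b : ℕ) :
    MvPolynomial (Fin 3 × Fin n) k :=
  xz k n hn a * yz k n hn b - xz k n hn b * yz k n hn a

/-- The squarefree monomial `X_K Y_L Z_{[1,n]\{i}}`. -/
noncomputable def monOf (k : Type*) [Field k] (n : ℕ) (hn : 0 < n)
    (K L : Finset ℕ) (i : ℕ) : MvPolynomial (Fin 3 × Fin n) k :=
  (∏ t ∈ K, xz k n hn t) * (∏ t ∈ L, yz k n hn t) *
    ∏ t ∈ (Finset.Icc 1 n).erase i, zz k n hn t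

/-- The set `M` of monomials `X_K Y_L Z_{[1,n]\{i}}` with
`K ∪ L = [1,n]\{i-1,i+1}` and `K ∩ L = ∅`. -/
noncomputable def Mset (k : Type*) [Field k] (n : ℕ) (hn : 0 < n) (i : ℕ) :
    Set (MvPolynomial (Fin 3 × Fin n) k) :=
  {m | ∃ K L : Finset ℕ, K ∪ L = Finset.Icc 1 n \ {i - 1, i + 1} ∧ Disjoint K L ∧
    m = monOf k n hn K L i}

/-- `v` is more significant than `w` for the variable order
`x_1 > … > x_n > y_1 > … > y_n > z_1 > … > z_n`. -/
def vlt (n : ℕ) (v w : Fin 3 × Fin n) : Prop :=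
  v.1 < w.1 ∨ (v.1 = w.1 ∧ v.2 < w.2)

def mdeg (n : ℕ) (a : (Fin 3 × Fin n) →₀ ℕ) : ℕ := a.sum fun _ e => e

/-- Graded reverse lexicographic comparison of exponent vectors. -/
def rlt (n : ℕ) (a b : (Fin 3 × Fin n) →₀ ℕ) : Prop :=
  mdeg n a < mdeg n b ∨
    (mdeg n a = mdeg n b ∧ ∃ v, b v < a v ∧ ∀ w, vlt n v w → a w = b w)

/-- `d` is the exponent of the initial term of `f` w.r.t. reverse lex order. -/
def IsInit {k : Type*} [Field k] (n : ℕ) (f : MvPolynomial (Fin 3 × Fin n) k)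
    (d : (Fin 3 × Fin n) →₀ ℕ) : Prop :=
  d ∈ f.support ∧ ∀ e ∈ f.support, e ≠ d → rlt n e d

/-- Exponent vector of the squarefree monomial `X_A Y_B Z_C`. -/
noncomputable def expOf (n : ℕ) (hn : 0 < n) (A B Cs : Finset ℕ) :
    (Fin 3 × Fin n) →₀ ℕ :=
  (∑ t ∈ A, Finsupp.single ((0 : Fin 3), fi n hn t) 1) +
  (∑ t ∈ B, Finsupp.single ((1 : Fin 3), fi n hn t) 1) +
  (∑ t ∈ Cs, Finsupp.single ((2 : Fin 3), fi n hn t) 1)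

/-!
Moving a single index between `K` and `L` preserves `K ∪ L = [1,n] \ {i-1, i+1}` and
`K ∩ L = ∅`, which gives the closure of `M`.

For `g = X_A Y_B Z_C Δ_{l,m}` with `m < l`, the leading term is `X_A Y_B Z_C x_l y_m`; in the
S-polynomial of `g` and `X_K Y_L Z` these cancel, leaving the single term `-lcm · x_m y_l/(x_l y_m)`.
That monomial is divisible by `X_K' Y_L' Z ∈ M`, where `K', L'` arise from `K, L` by moving
`l` to `L` and `m` to `K`, and one division step is a standard representation.
-/

namespace Finset

variable {α : Type*} [DecidableEq α] {K L : Finset α} {a : α}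

theorem erase_union_insert_eq_and_disjoint {U : Finset α} (hU : K ∪ L = U) (hd : Disjoint K L)
    (ha : a ∈ K) : K.erase a ∪ insert a L = U ∧ Disjoint (K.erase a) (insert a L) :=
  ⟨by rw [union_insert, ← insert_union, insert_erase ha, hU],
    disjoint_insert_right.2 ⟨notMem_erase a K, disjoint_of_subset_left (erase_subset a K) hd⟩⟩

theorem insert_union_erase_eq_and_disjoint {U : Finset α} (hU : K ∪ L = U) (hd : Disjoint K L)
    (ha : a ∈ L) : insert a K ∪ L.erase a = U ∧ Disjoint (insert a K) (L.erase a) := by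
  obtain ⟨hU', hd'⟩ := erase_union_insert_eq_and_disjoint ((union_comm L K).trans hU) hd.symm ha
  exact ⟨(union_comm _ _).trans hU', hd'.symm⟩

theorem sdiff_union_inter_union_sdiff_union_inter (l m : α) :
    (K \ {l} ∪ L ∩ {m}) ∪ (L \ {m} ∪ K ∩ {l}) = K ∪ L := by
  ext p
  simp only [mem_union, mem_sdiff, mem_inter, mem_singleton]
  tauto

theorem disjoint_sdiff_union_inter {l m : α} (h : Disjoint K L) (hlm : l ≠ m) :
    Disjoint (K \ {l} ∪ L ∩ {m}) (L \ {m} ∪ K ∩ {l}) := by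
  rw [disjoint_left]
  simp only [mem_union, mem_sdiff, mem_inter, mem_singleton]
  rintro p (⟨hK, hpl⟩ | ⟨-, rfl⟩) (⟨hL, hpm⟩ | ⟨-, hp⟩)
  exacts [disjoint_left.1 h hK hL, hpl hp, hpm rfl, hlm hp.symm]

end Finset

section Exponents

variable {n : ℕ} (hn : 0 < n)

theorem fi_eq_iff {t : ℕ} (ht : t ∈ Finset.Icc 1 n) (u : Fin n) : fi n hn t = u ↔ t = u + 1 := by
  rw [Finset.mem_Icc] at ht
  simp only [fi, Fin.ext_iff, Nat.mod_eq_of_lt (show t - 1 < n by omega)]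
  omega

theorem sum_single_fi_apply (j : Fin 3) {A : Finset ℕ} (hA : A ⊆ Finset.Icc 1 n)
    (j' : Fin 3) (u : Fin n) :
    (∑ t ∈ A, Finsupp.single (j, fi n hn t) 1) (j', u) =
      if j' = j ∧ (u : ℕ) + 1 ∈ A then 1 else 0 := by
  have hterm : ∀ t ∈ A, Finsupp.single (j, fi n hn t) 1 (j', u) =
      if t = (u : ℕ) + 1 then (if j' = j then 1 else 0) else 0 := fun t ht => by
    simp only [Finsupp.single_apply, Prod.mk.injEq, fi_eq_iff hn (hA ht), eq_comm (a := j)]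
    split_ifs <;> tauto
  rw [Finsupp.finsetSum_apply, Finset.sum_congr rfl hterm, Finset.sum_ite_eq']
  split_ifs <;> tauto

theorem expOf_apply {A B C : Finset ℕ} (hA : A ⊆ Finset.Icc 1 n) (hB : B ⊆ Finset.Icc 1 n)
    (hC : C ⊆ Finset.Icc 1 n) (j : Fin 3) (u : Fin n) :
    expOf n hn A B C (j, u) =
      (if j = 0 ∧ (u : ℕ) + 1 ∈ A then 1 else 0) + (if j = 1 ∧ (u : ℕ) + 1 ∈ B then 1 else 0) +
        (if j = 2 ∧ (u : ℕ) + 1 ∈ C then 1 else 0) := by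
  simp only [expOf, Finsupp.add_apply, sum_single_fi_apply hn _ hA, sum_single_fi_apply hn _ hB,
    sum_single_fi_apply hn _ hC]

theorem expOf_swap_le {l m : ℕ} {A B C K L Z : Finset ℕ} (hl : l ∈ Finset.Icc 1 n)
    (hm : m ∈ Finset.Icc 1 n) (hA : A ⊆ Finset.Icc 1 n) (hB : B ⊆ Finset.Icc 1 n)
    (hC : C ⊆ Finset.Icc 1 n) (hKL : K ∪ L ⊆ Finset.Icc 1 n) (hZ : Z ⊆ Finset.Icc 1 n) :
    expOf n hn (K \ {l} ∪ L ∩ {m}) (L \ {m} ∪ K ∩ {l}) Z ≤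
      expOf n hn K L Z - expOf n hn (insert l A) (insert m B) C ⊓ expOf n hn K L Z +
        expOf n hn (insert m A) (insert l B) C := by
  have hKL' := Finset.sdiff_union_inter_union_sdiff_union_inter (K := K) (L := L) l m ▸ hKL
  rintro ⟨j, u⟩
  simp only [Finsupp.add_apply, Finsupp.tsub_apply, Finsupp.inf_apply,
    expOf_apply hn (Finset.union_subset_left hKL') (Finset.union_subset_right hKL') hZ,
    expOf_apply hn (Finset.union_subset_left hKL) (Finset.union_subset_right hKL) hZ,
    expOf_apply hn (Finset.insert_subset hl hA) (Finset.insert_subset hm hB) hC,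
    expOf_apply hn (Finset.insert_subset hm hA) (Finset.insert_subset hl hB) hC]
  simp only [Finset.mem_union, Finset.mem_sdiff, Finset.mem_inter, Finset.mem_singleton,
    Finset.mem_insert]
  fin_cases j <;>
    simp only [Fin.zero_eta, Fin.mk_one, Fin.reduceFinMk, Fin.isValue, Fin.reduceEq, zero_ne_one,
      one_ne_zero, true_and, false_and, ↓reduceIte, add_zero, zero_add] <;>
    split_ifs <;> first | omega | tauto

end Exponents

/-- The S-polynomial of a binomial with leading exponent `a` and of the monomial `X^b`. -/
theorem MvPolynomial.monomial_mul_binomial_sub_monomial_mul {σ R : Type*} [CommRing R]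
    (a a' b : σ →₀ ℕ) :
    monomial (b - a ⊓ b) (1 : R) * (monomial a 1 - monomial a' 1) -
        monomial (a - a ⊓ b) 1 * monomial b 1 =
      -monomial (b - a ⊓ b + a') 1 := by
  have hlcm : b - a ⊓ b + a = a - a ⊓ b + b := by
    ext v
    simp only [Finsupp.add_apply, Finsupp.tsub_apply, Finsupp.inf_apply]
    omega
  simp only [mul_sub, monomial_mul, one_mul, hlcm, sub_sub_cancel_left]

section Monomials

variable {k : Type*} [Field k] {n : ℕ} (hn : 0 < n)

theorem monomial_expOf (A B C : Finset ℕ) :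
    monomial (expOf n hn A B C) (1 : k) =
      (∏ t ∈ A, xz k n hn t) * (∏ t ∈ B, yz k n hn t) * ∏ t ∈ C, zz k n hn t := by
  simp only [xz, yz, zz, X, ← monomial_sum_one, monomial_mul, mul_one]
  rfl

theorem monOf_eq_monomial_expOf (K L : Finset ℕ) (i : ℕ) :
    monOf k n hn K L i = monomial (expOf n hn K L ((Finset.Icc 1 n).erase i)) 1 :=
  (monomial_expOf hn K L _).symm

theorem prod_mul_Δz_eq {l m : ℕ} {A B : Finset ℕ} (C : Finset ℕ) (hlA : l ∉ A) (hmA : m ∉ A)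
    (hlB : l ∉ B) (hmB : m ∉ B) :
    (∏ t ∈ A, xz k n hn t) * (∏ t ∈ B, yz k n hn t) * (∏ t ∈ C, zz k n hn t) * Δz k n hn l m =
      monomial (expOf n hn (insert l A) (insert m B) C) 1 -
        monomial (expOf n hn (insert m A) (insert l B) C) 1 := by
  simp only [monomial_expOf, Finset.prod_insert, hlA, hmA, hlB, hmB, not_false_eq_true, Δz]
  ring

end Monomials

section StandardRep

variable {k : Type*} [Field k] {n : ℕ}

/-- `S = ∑ u ∈ T, h u * u` with no initial term on the right above that of `S`: a standard
representation of `S` by elements of `P`, i.e. `S` reduces to zero modulo `P`. -/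
def HasStandardRep (P : Set (MvPolynomial (Fin 3 × Fin n) k))
    (S : MvPolynomial (Fin 3 × Fin n) k) : Prop :=
  ∃ (T : Finset (MvPolynomial (Fin 3 × Fin n) k))
    (h : MvPolynomial (Fin 3 × Fin n) k → MvPolynomial (Fin 3 × Fin n) k),
    ↑T ⊆ P ∧ S = ∑ u ∈ T, h u * u ∧
      ∀ u ∈ T, ∀ e, IsInit n (h u * u) e → ∃ d, IsInit n S d ∧ (e = d ∨ rlt n e d)

theorem isInit_monomial_iff {c : k} (hc : c ≠ 0) (E e : (Fin 3 × Fin n) →₀ ℕ) :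
    IsInit n (monomial E c) e ↔ e = E := by
  classical
  simp only [IsInit, support_monomial, if_neg hc, Finset.mem_singleton]
  exact ⟨And.left, fun h => ⟨h, fun e' he' hne => (hne (he'.trans h.symm)).elim⟩⟩

theorem hasStandardRep_monomial {P : Set (MvPolynomial (Fin 3 × Fin n) k)}
    {u : MvPolynomial (Fin 3 × Fin n) k} {d E : (Fin 3 × Fin n) →₀ ℕ} {c : k} (huP : u ∈ P)
    (hu : u = monomial d 1) (hc : c ≠ 0) (hdE : d ≤ E) :
    HasStandardRep P (monomial E c) := by
  have hE : monomial (E - d) c * u = monomial E c := by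
    rw [hu, monomial_mul, mul_one, tsub_add_cancel_of_le hdE]
  refine ⟨{u}, fun _ => monomial (E - d) c, by simpa using huP, by rw [Finset.sum_singleton, hE],
    fun v hv e he => ⟨E, (isInit_monomial_iff hc E E).2 rfl, Or.inl ?_⟩⟩
  rw [Finset.mem_singleton.1 hv, hE, isInit_monomial_iff hc] at he
  exact he

end StandardRep

/-- Closure of the set `M` under the variable swaps
`x_l ↦ y_l`, `y_k ↦ x_k`, and the consequence: the S-polynomial of a squarefree
binomial `c·Δ_{l,k}` with any `m ∈ M` reduces to zero modulo `M ∪ {c·Δ_{l,k}}`. -/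
theorem stmt15 (k : Type*) [Field k] (n : ℕ) (hn : 4 ≤ n) (i : ℕ) :
    -- closure claims
    (∀ K L : Finset ℕ, K ∪ L = Finset.Icc 1 n \ {i - 1, i + 1} → Disjoint K L →
      (∀ l ∈ K, monOf k n (by omega) (K.erase l) (insert l L) i ∈ Mset k n (by omega) i) ∧
      (∀ m ∈ L, monOf k n (by omega) (insert m K) (L.erase m) i ∈ Mset k n (by omega) i) ∧
      (∀ l ∈ K, ∀ m ∈ L,
        monOf k n (by omega) (insert m (K.erase l)) (insert l (L.erase m)) i ∈
          Mset k n (by omega) i)) ∧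
    -- S-polynomial consequence
    (∀ l m : ℕ, 1 ≤ m → m < l → l ≤ n →
      ∀ A B Cs : Finset ℕ, l ∉ A → m ∉ A → l ∉ B → m ∉ B →
      A ⊆ Finset.Icc 1 n → B ⊆ Finset.Icc 1 n → Cs ⊆ Finset.Icc 1 n →
      ∀ K L : Finset ℕ, K ∪ L = Finset.Icc 1 n \ {i - 1, i + 1} → Disjoint K L →
      ∃ (T : Finset (MvPolynomial (Fin 3 × Fin n) k))
        (h : MvPolynomial (Fin 3 × Fin n) k → MvPolynomial (Fin 3 × Fin n) k),
        ↑T ⊆ Mset k n (by omega) i ∪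
          {(∏ t ∈ A, xz k n (by omega) t) * (∏ t ∈ B, yz k n (by omega) t) *
            (∏ t ∈ Cs, zz k n (by omega) t) * Δz k n (by omega) l m} ∧
        (monomial (expOf n (by omega) K L ((Finset.Icc 1 n).erase i) -
            (expOf n (by omega) (insert l A) (insert m B) Cs ⊓
              expOf n (by omega) K L ((Finset.Icc 1 n).erase i))) (1 : k)) *
          ((∏ t ∈ A, xz k n (by omega) t) * (∏ t ∈ B, yz k n (by omega) t) *
            (∏ t ∈ Cs, zz k n (by omega) t) * Δz k n (by omega) l m) -
        (monomial (expOf n (by omega) (insert l A) (insert m B) Cs -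
            (expOf n (by omega) (insert l A) (insert m B) Cs ⊓
              expOf n (by omega) K L ((Finset.Icc 1 n).erase i))) (1 : k)) *
          monOf k n (by omega) K L i =
          ∑ u ∈ T, h u * u ∧
        ∀ u ∈ T, ∀ e, IsInit n (h u * u) e →
          ∃ d, IsInit n
            ((monomial (expOf n (by omega) K L ((Finset.Icc 1 n).erase i) -
                (expOf n (by omega) (insert l A) (insert m B) Cs ⊓
                  expOf n (by omega) K L ((Finset.Icc 1 n).erase i))) (1 : k)) *
              ((∏ t ∈ A, xz k n (by omega) t) * (∏ t ∈ B, yz k n (by omega) t) *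
                (∏ t ∈ Cs, zz k n (by omega) t) * Δz k n (by omega) l m) -
            (monomial (expOf n (by omega) (insert l A) (insert m B) Cs -
                (expOf n (by omega) (insert l A) (insert m B) Cs ⊓
                  expOf n (by omega) K L ((Finset.Icc 1 n).erase i))) (1 : k)) *
              monOf k n (by omega) K L i) d ∧ (e = d ∨ rlt n e d)) := by
  have hn0 : 0 < n := by omega
  refine ⟨fun K L hu hd => ⟨fun l hl => ?_, fun m hm => ?_, fun l hl m hm => ?_⟩, ?_⟩
  · obtain ⟨hu', hd'⟩ := Finset.erase_union_insert_eq_and_disjoint hu hd hl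
    exact ⟨_, _, hu', hd', rfl⟩
  · obtain ⟨hu', hd'⟩ := Finset.insert_union_erase_eq_and_disjoint hu hd hm
    exact ⟨_, _, hu', hd', rfl⟩
  · have hlm : l ≠ m := fun h => Finset.disjoint_left.1 hd hl (h ▸ hm)
    obtain ⟨hu₁, hd₁⟩ := Finset.erase_union_insert_eq_and_disjoint hu hd hl
    obtain ⟨hu₂, hd₂⟩ :=
      Finset.insert_union_erase_eq_and_disjoint hu₁ hd₁ (Finset.mem_insert_of_mem hm)
    rw [Finset.erase_insert_of_ne hlm] at hu₂ hd₂
    exact ⟨_, _, hu₂, hd₂, rfl⟩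
  intro l m hm hml hln A B Cs hlA hmA hlB hmB hA hB hC K L hu hd
  have hKL : K ∪ L ⊆ Finset.Icc 1 n := hu ▸ Finset.sdiff_subset
  have hle := expOf_swap_le hn0 (A := A) (B := B) (C := Cs) (K := K) (L := L)
    (Finset.mem_Icc.2 ⟨by omega, hln⟩) (Finset.mem_Icc.2 ⟨hm, by omega⟩) hA hB hC hKL
    (Finset.erase_subset i _)
  have hS := monomial_mul_binomial_sub_monomial_mul (R := k)
    (expOf n hn0 (insert l A) (insert m B) Cs) (expOf n hn0 (insert m A) (insert l B) Cs)
    (expOf n hn0 K L ((Finset.Icc 1 n).erase i))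
  rw [← prod_mul_Δz_eq hn0 Cs hlA hmA hlB hmB, ← monOf_eq_monomial_expOf] at hS
  rw [hS, ← map_neg]
  exact hasStandardRep_monomial
    (Or.inl ⟨_, _, (Finset.sdiff_union_inter_union_sdiff_union_inter l m).trans hu,
      Finset.disjoint_sdiff_union_inter hd (by omega), rfl⟩)
    (monOf_eq_monomial_expOf hn0 _ _ i) (neg_ne_zero.2 one_ne_zero) hle
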